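/- arXiv:1609.09634 — 5 statements merged into one kernel-verified Lean document; each statement's English description precedes it below -/
import Mathlib

section
/- Let (p_k)_{k≥1} be a summable sequence of real numbers such that the sequence k ↦ d_k·|Σ_{i≥k} p_i| is summable. Then Σ_{k≥1} d_k·|Σ_{i≥k} p_i| ≥ (1/2)·Σ_{k≥1} |p_k|; that is, ‖p‖_{1D} ≥ (1/2)‖p‖_1. -/
/-! Writing `T k = ∑_{i ≥ k} p i` for the tail sums, `p k = T k - T (k + 1)`, so
`|p k| ≤ |T k| + |T (k + 1)|`; summing over `k` counts each `|T k|` at most twice, giving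
`‖p‖₁ ≤ 2 ∑ |T k|`, and `∑ |T k| ≤ ‖p‖_{1D}` because `d k ≥ d 0 = 1`. -/

noncomputable def tailSum {G : Type*} [AddCommMonoid G] [TopologicalSpace G] (p : ℕ → G)
    (k : ℕ) : G :=
  ∑' i, p (k + i)

lemma tailSum_eq_add_tailSum_succ {G : Type*} [AddCommGroup G] [TopologicalSpace G]
    [IsTopologicalAddGroup G] [T2Space G] {p : ℕ → G} (hp : Summable p) (k : ℕ) :
    tailSum p k = p k + tailSum p (k + 1) := by
  have hk : Summable fun i => p (k + i) := by
    simpa only [add_comm k] using (summable_nat_add_iff k).2 hp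
  simp only [tailSum, hk.tsum_eq_zero_add, add_zero, add_assoc, add_comm 1]

lemma norm_le_norm_tailSum_add_norm_tailSum_succ {E : Type*} [SeminormedAddCommGroup E]
    [T2Space E] {p : ℕ → E} (hp : Summable p) (k : ℕ) :
    ‖p k‖ ≤ ‖tailSum p k‖ + ‖tailSum p (k + 1)‖ := by
  rw [eq_sub_of_add_eq (tailSum_eq_add_tailSum_succ hp k).symm]
  exact norm_sub_le _ _

lemma tsum_add_succ_le_two_mul_tsum {g : ℕ → ℝ} (hg : Summable g) (hg0 : 0 ≤ g 0) :
    ∑' k, (g k + g (k + 1)) ≤ 2 * ∑' k, g k := by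
  have hg1 : Summable fun k => g (k + 1) := (summable_nat_add_iff 1).2 hg
  rw [hg.tsum_add hg1]
  linarith [hg.tsum_eq_zero_add]

lemma tsum_norm_le_two_mul_tsum_norm_tailSum {E : Type*} [SeminormedAddCommGroup E]
    [T2Space E] {p : ℕ → E} (hp : Summable p) (hT : Summable fun k => ‖tailSum p k‖) :
    ∑' k, ‖p k‖ ≤ 2 * ∑' k, ‖tailSum p k‖ := by
  have hT2 : Summable fun k => ‖tailSum p k‖ + ‖tailSum p (k + 1)‖ :=
    hT.add ((summable_nat_add_iff 1).2 hT)
  calc ∑' k, ‖p k‖ ≤ ∑' k, (‖tailSum p k‖ + ‖tailSum p (k + 1)‖) :=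
        (hT2.of_nonneg_of_le (fun _ => norm_nonneg _)
          (norm_le_norm_tailSum_add_norm_tailSum_succ hp)).tsum_le_tsum
          (norm_le_norm_tailSum_add_norm_tailSum_succ hp) hT2
    _ ≤ 2 * ∑' k, ‖tailSum p k‖ := tsum_add_succ_le_two_mul_tsum hT (norm_nonneg _)

theorem norm1D_ge_half_l1_general
    (d : ℕ → ℝ) (hd1 : d 0 = 1) (hdmono : Monotone d)
    (p : ℕ → ℝ) (hp : Summable p)
    (hD : Summable (fun k : ℕ => d k * |∑' i : ℕ, p (k + i)|)) :
    (∑' k : ℕ, d k * |∑' i : ℕ, p (k + i)|) ≥ (1 / 2) * ∑' k : ℕ, |p k| := by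
  have hweight : ∀ k, |tailSum p k| ≤ d k * |tailSum p k| := fun k =>
    le_mul_of_one_le_left (abs_nonneg _) (hd1 ▸ hdmono k.zero_le)
  have hT : Summable fun k => |tailSum p k| :=
    hD.of_nonneg_of_le (fun _ => abs_nonneg _) hweight
  have hl1 := tsum_norm_le_two_mul_tsum_norm_tailSum hp hT
  simp only [Real.norm_eq_abs] at hl1
  calc (1 / 2) * ∑' k, |p k| ≤ ∑' k, |tailSum p k| := by linarith
    _ ≤ ∑' k, d k * |∑' i, p (k + i)| := hT.tsum_le_tsum hweight hD

/-- Let `(d_k)_{k≥1}` be a nondecreasing sequence of positive reals with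
`d_1 = 1` (here indexed so that `d k` stands for `d_{k+1}`).  If `(p_k)_{k≥1}` is a summable
real sequence (here `p k` stands for `p_{k+1}`) such that `k ↦ d_k·|Σ_{i≥k} p_i|` is summable,
then `Σ_{k≥1} d_k·|Σ_{i≥k} p_i| ≥ (1/2)·Σ_{k≥1} |p_k|`, i.e. `‖p‖_{1D} ≥ (1/2)‖p‖_1`. -/
theorem norm1D_ge_half_l1
    (d : ℕ → ℝ) (hd1 : d 0 = 1) (hdpos : ∀ k, 0 < d k) (hdmono : Monotone d)
    (p : ℕ → ℝ) (hp : Summable p)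
    (hD : Summable (fun k : ℕ => d k * |∑' i : ℕ, p (k + i)|)) :
    (∑' k : ℕ, d k * |∑' i : ℕ, p (k + i)|) ≥ (1 / 2) * ∑' k : ℕ, |p k| :=
  norm1D_ge_half_l1_general d hd1 hdmono p hp hD
end

section
/- Let (p_k)_{k≥1} be a summable sequence of real numbers such that the sequence k ↦ d_k·|Σ_{i≥k} p_i| is summable, and suppose W := inf_{k≥1} d_k/k > 0. Then the sequence k ↦ k·|p_k| is summable and Σ_{k≥1} k·|p_k| ≤ (2/W)·Σ_{k≥1} d_k·|Σ_{i≥k} p_i|; that is, ‖p‖_{1E} ≤ (2/W)‖p‖_{1D}. -/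
/-! Writing `T k = ∑_{i ≥ k} p i`, we have `p k = T k - T (k+1)`, and `W` is chosen so that
`(k+1) W ≤ d k`. Hence `W (k+1) |p k| ≤ d k |T k| + d k |T (k+1)| ≤ d k |T k| + d (k+1) |T (k+1)|`
by monotonicity of `d`, and summing over `k` counts every term of `‖p‖_{1D}` at most twice. -/

open Set

lemma Real.bddBelow_range_of_iInf_ne_zero {ι : Sort*} {f : ι → ℝ} (h : ⨅ i, f i ≠ 0) :
    BddBelow (range f) := by
  by_contra hf
  exact h (Real.iInf_of_not_bddBelow hf)

lemma Summable.tsum_nat_add_eq_add_tsum_succ_add {p : ℕ → ℝ} (hp : Summable p) (k : ℕ) :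
    ∑' i, p (k + i) = p k + ∑' i, p (k + 1 + i) := by
  have htail : Summable fun i => p (k + i) := by
    simpa only [add_comm] using (summable_nat_add_iff k).2 hp
  simpa only [add_zero, add_assoc, add_comm 1] using htail.tsum_eq_zero_add

lemma Summable.abs_le_abs_tsum_nat_add_add {p : ℕ → ℝ} (hp : Summable p) (k : ℕ) :
    |p k| ≤ |∑' i, p (k + i)| + |∑' i, p (k + 1 + i)| := by
  have hpk : p k = ∑' i, p (k + i) - ∑' i, p (k + 1 + i) := by
    rw [hp.tsum_nat_add_eq_add_tsum_succ_add k]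
    ring
  rw [hpk]
  exact abs_sub _ _

lemma Summable.mul_mul_abs_le_add_succ {d p : ℕ → ℝ} (hdmono : Monotone d) (hp : Summable p)
    {c : ℝ} (hc : 0 ≤ c) (hcd : ∀ k : ℕ, (k + 1) * c ≤ d k) (k : ℕ) :
    c * ((k + 1) * |p k|) ≤
      d k * |∑' i, p (k + i)| + d (k + 1) * |∑' i, p (k + 1 + i)| := by
  have hdk : 0 ≤ d k := le_trans (by positivity) (hcd k)
  calc c * ((k + 1) * |p k|) = (k + 1) * c * |p k| := by ring
    _ ≤ d k * (|∑' i, p (k + i)| + |∑' i, p (k + 1 + i)|) :=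
      mul_le_mul (hcd k) (hp.abs_le_abs_tsum_nat_add_add k) (abs_nonneg _) hdk
    _ ≤ d k * |∑' i, p (k + i)| + d (k + 1) * |∑' i, p (k + 1 + i)| := by
      rw [mul_add]
      gcongr
      exact hdmono k.le_succ

lemma summable_and_tsum_le_two_div_mul_of_mul_le_add_succ {f g : ℕ → ℝ} {c : ℝ} (hc : 0 < c)
    (hf : Summable f) (hf0 : ∀ k, 0 ≤ f k) (hg0 : ∀ k, 0 ≤ g k)
    (hgf : ∀ k, c * g k ≤ f k + f (k + 1)) :
    Summable g ∧ ∑' k, g k ≤ 2 / c * ∑' k, f k := by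
  have hf' : Summable fun k => f (k + 1) := (summable_nat_add_iff 1).2 hf
  have hsum : Summable fun k => (f k + f (k + 1)) / c := (hf.add hf').div_const c
  have hle : ∀ k, g k ≤ (f k + f (k + 1)) / c := fun k => by
    rw [le_div_iff₀ hc, mul_comm]
    exact hgf k
  have hg : Summable g := hsum.of_nonneg_of_le hg0 hle
  refine ⟨hg, ?_⟩
  have hshift : ∑' k, f (k + 1) ≤ ∑' k, f k := by
    linarith [hf.tsum_eq_zero_add, hf0 0]
  calc ∑' k, g k ≤ ∑' k, (f k + f (k + 1)) / c := hg.tsum_le_tsum hle hsum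
    _ = (∑' k, f k + ∑' k, f (k + 1)) / c := by rw [tsum_div_const, hf.tsum_add hf']
    _ ≤ (∑' k, f k + ∑' k, f k) / c := by gcongr
    _ = 2 / c * ∑' k, f k := by ring

theorem norm1E_le_two_div_W_mul_norm1D_general
    (d : ℕ → ℝ) (hdmono : Monotone d)
    (W : ℝ) (hW : W = ⨅ k : ℕ, d k / (k + 1)) (hWpos : 0 < W)
    (p : ℕ → ℝ) (hp : Summable p)
    (hD : Summable (fun k : ℕ => d k * |∑' i : ℕ, p (k + i)|)) :
    Summable (fun k : ℕ => (k + 1 : ℝ) * |p k|) ∧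
      (∑' k : ℕ, (k + 1 : ℝ) * |p k|) ≤
        (2 / W) * ∑' k : ℕ, d k * |∑' i : ℕ, p (k + i)| := by
  have hbdd : BddBelow (range fun k : ℕ => d k / (k + 1)) :=
    Real.bddBelow_range_of_iInf_ne_zero (hW ▸ hWpos.ne')
  have hWd : ∀ k : ℕ, (k + 1) * W ≤ d k := fun k => by
    rw [mul_comm, ← le_div_iff₀ (by positivity), hW]
    exact ciInf_le hbdd k
  have hd0 : ∀ k, 0 ≤ d k := fun k => le_trans (by positivity) (hWd k)
  refine summable_and_tsum_le_two_div_mul_of_mul_le_add_succ hWpos hD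
    (fun k => mul_nonneg (hd0 k) (abs_nonneg _)) (fun k => by positivity) fun k => ?_
  simpa only [add_right_comm k 1] using hp.mul_mul_abs_le_add_succ hdmono hWpos.le hWd k

/-- Let `(d_k)_{k≥1}` be a nondecreasing sequence of positive reals with
`d_1 = 1` (here `d k` stands for `d_{k+1}`).  Let `(p_k)_{k≥1}` be a summable real sequence
(here `p k` stands for `p_{k+1}`) such that `k ↦ d_k·|Σ_{i≥k} p_i|` is summable, and suppose
`W := inf_{k≥1} d_k / k > 0`.  Then `k ↦ k·|p_k|` is summable and
`Σ_{k≥1} k·|p_k| ≤ (2/W)·Σ_{k≥1} d_k·|Σ_{i≥k} p_i|`, i.e. `‖p‖_{1E} ≤ (2/W)·‖p‖_{1D}`. -/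
theorem norm1E_le_two_div_W_mul_norm1D
    (d : ℕ → ℝ) (hd1 : d 0 = 1) (hdpos : ∀ k, 0 < d k) (hdmono : Monotone d)
    (W : ℝ) (hW : W = ⨅ k : ℕ, d k / (k + 1)) (hWpos : 0 < W)
    (p : ℕ → ℝ) (hp : Summable p)
    (hD : Summable (fun k : ℕ => d k * |∑' i : ℕ, p (k + i)|)) :
    Summable (fun k : ℕ => (k + 1 : ℝ) * |p k|) ∧
      (∑' k : ℕ, (k + 1 : ℝ) * |p k|) ≤
        (2 / W) * ∑' k : ℕ, d k * |∑' i : ℕ, p (k + i)| :=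
  norm1E_le_two_div_W_mul_norm1D_general d hdmono W hW hWpos p hp hD
end

section
/- Let (p_k)_{k≥1} be a summable sequence of nonnegative real numbers such that the sequence k ↦ d_k·(Σ_{i≥k} p_i) is summable. Then the sequence k ↦ k·p_k is summable and Σ_{k≥1} d_k·(Σ_{i≥k} p_i) ≥ W*·Σ_{k≥1} k·p_k, where W* = inf_{k≥1} (d_1 + d_2 + ... + d_k)/k. -/
/-!
Writing the tails as double sums and summing along antidiagonals gives the Abel-type identity
`∑ₖ d_k ∑_{i≥k} p_i = ∑ₙ (d_1 + ⋯ + d_n) p_n` (all terms are nonnegative, so the rearrangement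
is legitimate). Termwise, `d_1 + ⋯ + d_n ≥ n` because `d ≥ d_1 = 1`, which gives summability of
`n p_n`, and `d_1 + ⋯ + d_n ≥ W* n` by the definition of `W*`, which gives the inequality.
-/

open Finset

theorem HasSum.sum_range_succ_of_prod_add {α : Type*} [AddCommMonoid α] [TopologicalSpace α]
    [ContinuousAdd α] [RegularSpace α] {G : ℕ → ℕ → α} {a : α}
    (h : HasSum (fun x : ℕ × ℕ => G x.1 (x.1 + x.2)) a) :
    HasSum (fun n => ∑ k ∈ range (n + 1), G k n) a := by
  refine (HasAntidiagonal.sigmaAntidiagonalEquivProd.hasSum_iff.2 h).sigma fun n => ?_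
  convert hasSum_fintype _
  rw [← Nat.sum_antidiagonal_eq_sum_range_succ (fun k _ => G k n), ← sum_coe_sort]
  exact sum_congr rfl fun ⟨kl, hkl⟩ _ => by simp [mem_antidiagonal.1 hkl]

theorem hasSum_sum_range_mul_of_summable_mul_tsum {d p : ℕ → ℝ} (hd : ∀ k, 0 ≤ d k)
    (hp₀ : ∀ k, 0 ≤ p k) (hp : Summable p)
    (hD : Summable fun k => d k * ∑' i, p (k + i)) :
    HasSum (fun n => (∑ j ∈ range (n + 1), d j) * p n) (∑' k, d k * ∑' i, p (k + i)) := by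
  have hrow (k : ℕ) : HasSum (fun i => d k * p (k + i)) (d k * ∑' i, p (k + i)) :=
    (hp.comp_injective (add_right_injective k)).hasSum.mul_left (d k)
  have hF : Summable fun x : ℕ × ℕ => d x.1 * p (x.1 + x.2) :=
    (summable_prod_of_nonneg fun x => mul_nonneg (hd _) (hp₀ _)).2
      ⟨fun k => (hrow k).summable, by simpa only [(hrow _).tsum_eq] using hD⟩
  rw [(hF.hasSum.prod_fiberwise hrow).tsum_eq]
  simpa only [sum_mul] using hF.hasSum.sum_range_succ_of_prod_add (G := fun k n => d k * p n)

theorem ciInf_div_mul_le {ι : Type*} {f c : ι → ℝ}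
    (hbdd : BddBelow (Set.range fun k => f k / c k)) {n : ι} (hc : 0 < c n) :
    (⨅ k, f k / c k) * c n ≤ f n :=
  (le_div_iff₀ hc).1 (ciInf_le hbdd n)

-- Indices are shifted by one: `d k` and `p k` stand for `d_{k+1}` and `p_{k+1}`.
theorem norm1D_ge_Wstar_mul_mean_general
    (d : ℕ → ℝ) (hd1 : d 0 = 1) (hdmono : Monotone d)
    (p : ℕ → ℝ) (hppos : ∀ k, 0 ≤ p k) (hp : Summable p)
    (hD : Summable (fun k : ℕ => d k * ∑' i : ℕ, p (k + i))) :
    Summable (fun k : ℕ => (k + 1 : ℝ) * p k) ∧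
      (∑' k : ℕ, d k * ∑' i : ℕ, p (k + i)) ≥
        (⨅ k : ℕ, (∑ j ∈ Finset.range (k + 1), d j) / (k + 1)) *
          ∑' k : ℕ, (k + 1 : ℝ) * p k := by
  have hd_ge_one (k : ℕ) : 1 ≤ d k := hd1 ▸ hdmono k.zero_le
  have hsum_ge (n : ℕ) : (n + 1 : ℝ) ≤ ∑ j ∈ range (n + 1), d j := by
    simpa using card_nsmul_le_sum (range (n + 1)) d 1 fun j _ => hd_ge_one j
  have hS := hasSum_sum_range_mul_of_summable_mul_tsum (fun k => zero_le_one.trans (hd_ge_one k))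
    hppos hp hD
  have hmean : Summable fun k : ℕ => (k + 1 : ℝ) * p k :=
    hS.summable.of_nonneg_of_le (fun k => mul_nonneg (by positivity) (hppos k))
      fun k => mul_le_mul_of_nonneg_right (hsum_ge k) (hppos k)
  refine ⟨hmean, ?_⟩
  have hbdd : BddBelow (Set.range fun k : ℕ => (∑ j ∈ range (k + 1), d j) / (k + 1)) :=
    ⟨0, by rintro _ ⟨k, rfl⟩; exact div_nonneg (by linarith [hsum_ge k]) (by positivity)⟩
  rw [ge_iff_le, ← tsum_mul_left]
  refine hasSum_le (fun k => ?_) (hmean.mul_left _).hasSum hS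
  rw [← mul_assoc]
  exact mul_le_mul_of_nonneg_right (ciInf_div_mul_le hbdd (by positivity)) (hppos k)

/-- Let `(d_k)_{k≥1}` be a nondecreasing sequence of positive reals with
`d_1 = 1` (here `d k` stands for `d_{k+1}`).  Let `(p_k)_{k≥1}` be a summable sequence of
nonnegative reals (here `p k` stands for `p_{k+1}`) such that `k ↦ d_k·(Σ_{i≥k} p_i)` is
summable.  Then `k ↦ k·p_k` is summable and
`Σ_{k≥1} d_k·(Σ_{i≥k} p_i) ≥ W*·Σ_{k≥1} k·p_k`, where
`W* = inf_{k≥1} (d_1 + ⋯ + d_k)/k`. -/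
theorem norm1D_ge_Wstar_mul_mean
    (d : ℕ → ℝ) (hd1 : d 0 = 1) (hdpos : ∀ k, 0 < d k) (hdmono : Monotone d)
    (p : ℕ → ℝ) (hppos : ∀ k, 0 ≤ p k) (hp : Summable p)
    (hD : Summable (fun k : ℕ => d k * ∑' i : ℕ, p (k + i))) :
    Summable (fun k : ℕ => (k + 1 : ℝ) * p k) ∧
      (∑' k : ℕ, d k * ∑' i : ℕ, p (k + i)) ≥
        (⨅ k : ℕ, (∑ j ∈ Finset.range (k + 1), d j) / (k + 1)) *
          ∑' k : ℕ, (k + 1 : ℝ) * p k :=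
  norm1D_ge_Wstar_mul_mean_general d hd1 hdmono p hppos hp hD
end

section
/- Let B be a continuous linear operator on the Banach space l¹ = l¹(ℕ, ℝ), and let b_{ij} = (B e_j)_i be its matrix entries, where e_j denotes the j-th standard unit vector. Then for every h with 0 < h < 1/(1 + ‖B‖) one has ‖I + hB‖ = 1 + h·sup_j (b_{jj} + Σ_{i≠j} |b_{ij}|); consequently the logarithmic norm γ(B) = lim_{h→0+} (‖I + hB‖ − 1)/h exists and equals sup_j (b_{jj} + Σ_{i≠j} |b_{ij}|). -/
open scoped Topology ENNReal

/-- The Banach space `l¹ = l¹(ℕ, ℝ)` of absolutely summable real sequences. -/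
noncomputable abbrev l1Space : Type := lp (fun _ : ℕ => ℝ) 1

lemma l1_norm_eq_tsum (f : l1Space) : ‖f‖ = ∑' i, ‖f i‖ := by
  have := lp.norm_eq_tsum_rpow (p := (1 : ℝ≥0∞)) (E := fun _ : ℕ => ℝ) (by norm_num) f
  simpa using this

lemma l1_summable_norm (f : l1Space) : Summable (fun i => ‖f i‖) := by
  have := (lp.memℓp f).summable (p := (1 : ℝ≥0∞)) (by norm_num)
  simpa using this

lemma opNorm_eq_ciSup (A : l1Space →L[ℝ] l1Space) :
    ‖A‖ = ⨆ j : ℕ, ‖A (lp.single 1 j (1 : ℝ))‖ := by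
  have hns : ∀ j : ℕ, ‖(lp.single 1 j (1 : ℝ) : l1Space)‖ = 1 := by
    intro j
    have := lp.norm_single (p := (1 : ℝ≥0∞)) (E := fun _ : ℕ => ℝ) (by norm_num)
      j (1 : ℝ)
    simpa using this
  have hbdd : BddAbove (Set.range fun j : ℕ => ‖A (lp.single 1 j (1 : ℝ))‖) := by
    refine ⟨‖A‖, ?_⟩
    rintro _ ⟨j, rfl⟩
    calc ‖A (lp.single 1 j (1 : ℝ))‖ ≤ ‖A‖ * ‖(lp.single 1 j (1 : ℝ) : l1Space)‖ :=
            A.le_opNorm _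
      _ = ‖A‖ := by rw [hns j, mul_one]
  refine le_antisymm ?_ ?_
  · have hM0 : 0 ≤ ⨆ j : ℕ, ‖A (lp.single 1 j (1 : ℝ))‖ :=
      le_trans (norm_nonneg _) (le_ciSup hbdd 0)
    refine A.opNorm_le_bound hM0 (fun x => ?_)
    set M := ⨆ j : ℕ, ‖A (lp.single 1 j (1 : ℝ))‖ with hM
    have hx : HasSum (fun j : ℕ => lp.single 1 j (x j)) x :=
      lp.hasSum_single (by norm_num) x
    have hx' : HasSum (fun j : ℕ => x j • A (lp.single 1 j (1 : ℝ))) (A x) := by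
      have := hx.mapL A
      refine this.congr_fun (fun j => ?_)
      rw [← A.map_smul, ← lp.single_smul]
      norm_num
    have hsum : Summable (fun j : ℕ => ‖x j • A (lp.single 1 j (1 : ℝ))‖) := by
      refine Summable.of_nonneg_of_le (fun j => norm_nonneg _) (fun j => ?_)
        ((l1_summable_norm x).mul_right M)
      rw [norm_smul]
      exact mul_le_mul_of_nonneg_left (le_ciSup hbdd j) (norm_nonneg _)
    calc ‖A x‖ = ‖∑' j, x j • A (lp.single 1 j (1 : ℝ))‖ := by rw [hx'.tsum_eq]
      _ ≤ ∑' j, ‖x j • A (lp.single 1 j (1 : ℝ))‖ := norm_tsum_le_tsum_norm hsum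
      _ ≤ ∑' j, ‖x j‖ * M := by
          refine Summable.tsum_le_tsum (fun j => ?_) hsum ((l1_summable_norm x).mul_right M)
          rw [norm_smul]
          exact mul_le_mul_of_nonneg_left (le_ciSup hbdd j) (norm_nonneg _)
      _ = (∑' j, ‖x j‖) * M := tsum_mul_right
      _ = M * ‖x‖ := by rw [l1_norm_eq_tsum x, mul_comm]
  · refine ciSup_le (fun j => ?_)
    calc ‖A (lp.single 1 j (1 : ℝ))‖ ≤ ‖A‖ * ‖(lp.single 1 j (1 : ℝ) : l1Space)‖ :=
          A.le_opNorm _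
      _ = ‖A‖ := by rw [hns j, mul_one]

/-- Let `B` be a continuous linear operator on `l¹(ℕ, ℝ)` with matrix
entries `b i j = (B e_j)_i`.  Then for every `h` with `0 < h < 1/(1 + ‖B‖)` one has
`‖I + h·B‖ = 1 + h·sup_j (b_{jj} + Σ_{i≠j} |b_{ij}|)`; consequently the logarithmic norm
`γ(B) = lim_{h→0⁺} (‖I + hB‖ − 1)/h` exists and equals
`sup_j (b_{jj} + Σ_{i≠j} |b_{ij}|)`. -/
theorem logarithmic_norm_l1
    (B : l1Space →L[ℝ] l1Space)
    (b : ℕ → ℕ → ℝ) (hb : ∀ i j, b i j = (B (lp.single 1 j (1 : ℝ))) i) :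
    (∀ h : ℝ, 0 < h → h < 1 / (1 + ‖B‖) →
      ‖(ContinuousLinearMap.id ℝ l1Space) + h • B‖ =
        1 + h * ⨆ j : ℕ, (b j j + ∑' i : ℕ, if i = j then 0 else |b i j|)) ∧
    Filter.Tendsto
      (fun h : ℝ => (‖(ContinuousLinearMap.id ℝ l1Space) + h • B‖ - 1) / h)
      (𝓝[>] 0)
      (𝓝 (⨆ j : ℕ, (b j j + ∑' i : ℕ, if i = j then 0 else |b i j|))) := by
  set c : ℕ → ℝ := fun j => b j j + ∑' i : ℕ, if i = j then 0 else |b i j| with hc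
  -- summability of columns
  have hsum : ∀ j, Summable (fun i => |b i j|) := by
    intro j
    have := l1_summable_norm (B (lp.single 1 j (1 : ℝ)))
    refine this.congr (fun i => ?_)
    rw [hb i j, Real.norm_eq_abs]
  have hcol : ∀ j, ∑' i, |b i j| = ‖B (lp.single 1 j (1 : ℝ))‖ := by
    intro j
    rw [l1_norm_eq_tsum]
    exact tsum_congr (fun i => by rw [hb i j, Real.norm_eq_abs])
  have hcolB : ∀ j, ∑' i, |b i j| ≤ ‖B‖ := by
    intro j
    rw [hcol j]
    calc ‖B (lp.single 1 j (1 : ℝ))‖ ≤ ‖B‖ * ‖(lp.single 1 j (1 : ℝ) : l1Space)‖ :=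
          B.le_opNorm _
      _ ≤ ‖B‖ * 1 := by
          have := lp.norm_single (p := (1 : ℝ≥0∞)) (E := fun _ : ℕ => ℝ) (by norm_num)
            j (1 : ℝ)
          rw [this]; norm_num
      _ = ‖B‖ := mul_one _
  have hdiag : ∀ j, |b j j| ≤ ∑' i, |b i j| := fun j =>
    Summable.le_tsum (hsum j) j (fun i _ => abs_nonneg _)
  have hcle : ∀ j, c j ≤ ∑' i, |b i j| := by
    intro j
    rw [hc]
    have := Summable.tsum_eq_add_tsum_ite (hsum j) j
    calc b j j + ∑' i : ℕ, ite (i = j) 0 |b i j|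
        ≤ |b j j| + ∑' i : ℕ, ite (i = j) 0 |b i j| := by
          gcongr; exact le_abs_self _
      _ = ∑' i, |b i j| := this.symm
  have hbdd : BddAbove (Set.range c) := by
    refine ⟨‖B‖, ?_⟩
    rintro _ ⟨j, rfl⟩
    exact (hcle j).trans (hcolB j)
  -- main formula
  have main : ∀ h : ℝ, 0 < h → h < 1 / (1 + ‖B‖) →
      ‖(ContinuousLinearMap.id ℝ l1Space) + h • B‖ = 1 + h * ⨆ j, c j := by
    intro h h0 hlt
    have hB1 : (0 : ℝ) < 1 + ‖B‖ := by positivity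
    have hh1 : h * (1 + ‖B‖) < 1 := by
      rw [div_eq_inv_mul, mul_one] at hlt
      calc h * (1 + ‖B‖) < (1 + ‖B‖)⁻¹ * (1 + ‖B‖) := by gcongr
        _ = 1 := inv_mul_cancel₀ hB1.ne'
    set A := (ContinuousLinearMap.id ℝ l1Space) + h • B with hA
    have hcolA : ∀ j, ‖A (lp.single 1 j (1 : ℝ))‖ = 1 + h * c j := by
      intro j
      set g := A (lp.single 1 j (1 : ℝ)) with hg
      have hgi : ∀ i, g i = (if i = j then (1 : ℝ) else 0) + h * b i j := by
        intro i
        rw [hg, hA]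
        have : ((ContinuousLinearMap.id ℝ l1Space + h • B) (lp.single 1 j (1 : ℝ))) i
            = (lp.single 1 j (1 : ℝ) : l1Space) i + h * (B (lp.single 1 j (1 : ℝ))) i := by
          simp [lp.coeFn_add, lp.coeFn_smul]
          rfl
        rw [this, ← hb i j]
        congr 1
        by_cases hij : i = j
        · subst hij; simp [lp.single_apply_self]
        · simp [lp.single_apply_ne _ j _ hij, hij]
      have hsg : Summable (fun i => ‖g i‖) := l1_summable_norm g
      have hdj : |b j j| ≤ ‖B‖ := (hdiag j).trans (hcolB j)
      have hpos : 0 < 1 + h * b j j := by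
        have h1 : h * |b j j| < 1 := by
          calc h * |b j j| ≤ h * ‖B‖ := by gcongr
            _ < h * (1 + ‖B‖) := by
                have : (‖B‖ : ℝ) < 1 + ‖B‖ := by linarith
                exact (mul_lt_mul_iff_right₀ h0).2 this
            _ < 1 := hh1
        have : -(h * b j j) ≤ h * |b j j| := by
          rw [← mul_neg] ; gcongr ; exact neg_le_abs _
        linarith
      have hgj : ‖g j‖ = 1 + h * b j j := by
        rw [hgi j, if_pos rfl, Real.norm_eq_abs, abs_of_pos hpos]
      have hgne : ∀ i, i ≠ j → ‖g i‖ = h * |b i j| := by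
        intro i hij
        rw [hgi i, if_neg hij, zero_add, Real.norm_eq_abs, abs_mul, abs_of_pos h0]
      calc ‖g‖ = ∑' i, ‖g i‖ := l1_norm_eq_tsum g
        _ = ‖g j‖ + ∑' i, ite (i = j) 0 ‖g i‖ := Summable.tsum_eq_add_tsum_ite hsg j
        _ = (1 + h * b j j) + h * ∑' i, ite (i = j) 0 |b i j| := by
            rw [hgj]
            congr 1
            rw [← tsum_mul_left]
            refine tsum_congr (fun i => ?_)
            by_cases hij : i = j
            · simp [hij]
            · rw [if_neg hij, if_neg hij, hgne i hij]
        _ = 1 + h * c j := by rw [hc]; ring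
    rw [opNorm_eq_ciSup A]
    have : (fun j : ℕ => ‖A (lp.single 1 j (1 : ℝ))‖) = fun j => 1 + h * c j :=
      funext hcolA
    rw [this]
    have hmono : Monotone (fun x : ℝ => 1 + h * x) := fun x y hxy => by
      dsimp; nlinarith
    have := hmono.map_ciSup_of_continuousAt (f := fun x : ℝ => 1 + h * x)
      (g := c) (by fun_prop) hbdd
    exact this.symm
  refine ⟨main, ?_⟩
  have hε : (0 : ℝ) < 1 / (1 + ‖B‖) := by positivity
  have hev : ∀ᶠ h : ℝ in 𝓝[>] 0,
      (‖(ContinuousLinearMap.id ℝ l1Space) + h • B‖ - 1) / h = ⨆ j, c j := by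
    filter_upwards [Ioo_mem_nhdsGT_of_mem (Set.mem_Ico.2 ⟨le_refl (0:ℝ), hε⟩)] with h hh
    rw [main h hh.1 hh.2]
    field_simp
    rw [add_sub_cancel_left]
    exact mul_div_cancel_left₀ _ hh.1.ne'
  exact Filter.Tendsto.congr' (hev.mono fun _ e => e.symm) tendsto_const_nhds
end

section
/- Let C : [0,∞) → L(l¹) be a strongly measurable family of continuous linear operators on l¹ = l¹(ℕ, ℝ) with ‖C(t)‖ ≤ M for almost all t, and suppose that for almost all t the matrix entries of C(t) are nonnegative off the diagonal, i.e. (C(t) e_j)_i ≥ 0 for all i ≠ j. Let v : [s,∞) → l¹ be continuous and satisfy v(t) = v(s) + ∫_s^t C(u)(v(u)) du (Bochner integral in l¹) for all t ≥ s. If every coordinate of v(s) is nonnegative, then every coordinate of v(t) is nonnegative for all t ≥ s. -/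
/-!
Let `K` be the cone of nonnegative sequences and `N x = infDist x K` the distance to it (on `l¹`,
the norm of the negative part of `x`). `N` is subadditive and positively homogeneous, hence convex,
so Jensen gives `N (∫ f) ≤ ∫ N ∘ f`; and an operator mapping `K` into `K` contracts `N` by its norm.
The operators `C t` themselves need not preserve `K` because of the diagonal, but `C t + M • id`
does, since its diagonal entries are at least `M - ‖C t‖ ≥ 0`. Hence `Y t = exp (M (t - s)) • v t`,
which solves `Y t = v s + ∫ₛᵗ (C u + M • id) (Y u) du` by Fubini, satisfies
`N (Y t) ≤ (M + |M|) ∫ₛᵗ N (Y u) du`, and Grönwall's inequality forces `N (Y t) = 0`.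
-/

open MeasureTheory

open Metric Set

theorem LipschitzWith.infDist_le_mul_of_mapsTo {α β : Type*} [PseudoMetricSpace α]
    [PseudoMetricSpace β] {f : α → β} {L : NNReal} (hf : LipschitzWith L f) {s : Set α}
    {t : Set β} (hs : s.Nonempty) (hst : MapsTo f s t) (x : α) :
    infDist (f x) t ≤ L * infDist x s := by
  have := hs.to_subtype
  rw [infDist_eq_iInf (x := x), Real.mul_iInf_of_nonneg L.coe_nonneg]
  exact le_ciInf fun p => (infDist_le_dist_of_mem (hst p.2)).trans (hf.dist_le_mul x p)

namespace ProperCone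

variable {E : Type*} [NormedAddCommGroup E] [NormedSpace ℝ E] (K : ProperCone ℝ E)

theorem infDist_eq_zero_iff {x : E} : infDist x K = 0 ↔ x ∈ K :=
  (K.isClosed.mem_iff_infDist_zero ⟨0, K.zero_mem⟩).symm

theorem infDist_add_le (x y : E) : infDist (x + y) K ≤ infDist x K + infDist y K := by
  have hK : (K : Set E).Nonempty := ⟨0, K.zero_mem⟩
  have h : ∀ p ∈ K, ∀ q ∈ K, infDist (x + y) K ≤ dist x p + dist y q := fun p hp q hq =>
    (infDist_le_dist_of_mem (K.add_mem hp hq)).trans (dist_add_add_le x y p q)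
  have h' : ∀ p ∈ K, infDist (x + y) K - dist x p ≤ infDist y K := fun p hp =>
    (le_infDist hK).2 fun q hq => by linarith [h p hp q hq]
  have : infDist (x + y) K - infDist y K ≤ infDist x K :=
    (le_infDist hK).2 fun p hp => by linarith [h' p hp]
  linarith

theorem infDist_smul_le {c : ℝ} (hc : 0 ≤ c) (x : E) : infDist (c • x) K ≤ c * infDist x K := by
  have hc' : ((‖c‖₊ : NNReal) : ℝ) = c := by simp [abs_of_nonneg hc]
  simpa [hc'] using (lipschitzWith_smul c).infDist_le_mul_of_mapsTo ⟨0, K.zero_mem⟩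
    (fun _ hx => K.smul_mem hx hc) x

theorem convexOn_infDist : ConvexOn ℝ univ (infDist · K : E → ℝ) :=
  ⟨convex_univ, fun x _ y _ _ _ ha hb _ =>
    (K.infDist_add_le _ _).trans (add_le_add (K.infDist_smul_le ha x) (K.infDist_smul_le hb y))⟩

theorem integrable_infDist_comp {α : Type*} [MeasurableSpace α] {μ : Measure α} {f : α → E}
    (hf : Integrable f μ) : Integrable (fun a => infDist (f a) K) μ :=
  hf.norm.mono' ((continuous_infDist_pt _).comp_aestronglyMeasurable hf.aestronglyMeasurable)
    (ae_of_all _ fun a => by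
      simpa [abs_of_nonneg infDist_nonneg] using infDist_le_dist_of_mem (x := f a) K.zero_mem)

theorem infDist_integral_le [CompleteSpace E] {α : Type*} [MeasurableSpace α] {μ : Measure α}
    [IsFiniteMeasure μ] {f : α → E} (hf : Integrable f μ) :
    infDist (∫ a, f a ∂μ) K ≤ ∫ a, infDist (f a) K ∂μ := by
  rcases eq_zero_or_neZero μ with rfl | _
  · simpa using (infDist_zero_of_mem K.zero_mem).le
  rw [← measure_smul_average, ← measure_smul_average μ (fun a => infDist (f a) K), smul_eq_mul]
  refine (K.infDist_smul_le measureReal_nonneg _).trans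
    (mul_le_mul_of_nonneg_left ?_ measureReal_nonneg)
  exact K.convexOn_infDist.map_average_le (continuous_infDist_pt _).continuousOn isClosed_univ
    (ae_of_all _ fun _ => mem_univ _) hf (K.integrable_infDist_comp hf)

end ProperCone

namespace lp

variable (ι : Type*) (p : ENNReal) [Fact (1 ≤ p)]

def nonnegCone : ProperCone ℝ (lp (fun _ : ι => ℝ) p) where
  carrier := {x | ∀ i, 0 ≤ x i}
  add_mem' hx hy i := add_nonneg (hx i) (hy i)
  zero_mem' _ := le_rfl
  smul_mem' c _ hx i := mul_nonneg c.2 (hx i)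
  isClosed' := by
    simp only [ofPred_forall]
    exact isClosed_iInter fun i =>
      isClosed_le continuous_const (lipschitzWith_one_eval p i).continuous

variable {ι p} [DecidableEq ι]

theorem neg_opNorm_le_apply_single_self (T : lp (fun _ : ι => ℝ) p →L[ℝ] lp (fun _ : ι => ℝ) p)
    (i : ι) : -‖T‖ ≤ T (lp.single p i 1) i := by
  have hp : 0 < p := zero_lt_one.trans_le Fact.out
  have := (norm_apply_le_norm hp.ne' (T (lp.single p i 1)) i).trans (T.le_opNorm _)
  rw [lp.norm_single hp, norm_one, mul_one, Real.norm_eq_abs] at this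
  exact (abs_le.1 this).1

theorem mapsTo_nonnegCone_of_apply_single_nonneg (hp : p ≠ ⊤)
    {T : lp (fun _ : ι => ℝ) p →L[ℝ] lp (fun _ : ι => ℝ) p}
    (hT : ∀ i j, 0 ≤ T (lp.single p j 1) i) :
    MapsTo T (nonnegCone ι p : Set _) (nonnegCone ι p) := fun x hx i => by
  have hsum := (lp.hasSum_single hp x).mapL ((evalCLM ℝ (fun _ : ι => ℝ) p i).comp T)
  refine hsum.nonneg fun j => ?_
  have : lp.single p j (x j) = x j • (lp.single p j 1 : lp (fun _ : ι => ℝ) p) := by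
    rw [← lp.single_smul, smul_eq_mul, mul_one]
  change 0 ≤ T (lp.single p j (x j)) i
  rw [this, map_smul, lp.coeFn_smul]
  exact mul_nonneg (hx j) (hT i j)

theorem mapsTo_nonnegCone_add_smul_id (hp : p ≠ ⊤)
    {T : lp (fun _ : ι => ℝ) p →L[ℝ] lp (fun _ : ι => ℝ) p} {l : ℝ} (hl : ‖T‖ ≤ l)
    (hT : ∀ i j, i ≠ j → 0 ≤ T (lp.single p j 1) i) :
    MapsTo (T + l • ContinuousLinearMap.id ℝ _ : lp (fun _ : ι => ℝ) p →L[ℝ] _)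
      (nonnegCone ι p) (nonnegCone ι p) := by
  refine mapsTo_nonnegCone_of_apply_single_nonneg hp fun i j => ?_
  simp only [add_apply, smul_apply, ContinuousLinearMap.id_apply, lp.coeFn_add, lp.coeFn_smul,
    Pi.add_apply, Pi.smul_apply, smul_eq_mul]
  obtain rfl | hij := eq_or_ne i j
  · rw [lp.single_apply_self, mul_one]
    linarith [neg_opNorm_le_apply_single_self T i]
  · rw [lp.single_apply_ne p j _ hij, mul_zero, add_zero]
    exact hT i j hij

end lp

section Integral

variable {E F : Type*} [NormedAddCommGroup E] [NormedSpace ℝ E] [NormedAddCommGroup F]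
  [NormedSpace ℝ F]

theorem intervalIntegrable_apply_of_norm_le {C : ℝ → E →L[ℝ] F} {v : ℝ → E} {M s t : ℝ}
    (hC : AEStronglyMeasurable C volume) (hM : ∀ᵐ u, s ≤ u → ‖C u‖ ≤ M) (hv : Continuous v)
    (hst : s ≤ t) : IntervalIntegrable (fun u => C u (v u)) volume s t := by
  obtain ⟨B, hB⟩ := isCompact_Icc.exists_bound_of_continuousOn (hv.continuousOn (s := Icc s t))
  rw [intervalIntegrable_iff_integrableOn_Ioc_of_le hst]
  refine Measure.integrableOn_of_bounded (M := M * B) measure_Ioc_lt_top.ne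
    ((ContinuousLinearMap.id ℝ (E →L[ℝ] F)).aestronglyMeasurable_comp₂ hC
      hv.aestronglyMeasurable) ?_
  filter_upwards [ae_restrict_mem measurableSet_Ioc, ae_restrict_of_ae hM] with u hu hCu
  exact (C u).le_of_opNorm_le_of_le (hCu hu.1.le) (hB u (Ioc_subset_Icc_self hu))

theorem intervalIntegral.integral_smul_integral_swap [CompleteSpace E] {s t : ℝ} (hst : s ≤ t)
    {f : ℝ → E} (hf : IntervalIntegrable f volume s t) {g : ℝ → ℝ}
    (hg : IntervalIntegrable g volume s t) :
    ∫ u in s..t, g u • ∫ r in s..u, f r = ∫ r in s..t, (∫ u in r..t, g u) • f r := by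
  set μ := volume.restrict (Ioc s t)
  set F : ℝ → ℝ → E := fun u r =>
    {p : ℝ × ℝ | p.2 ≤ p.1}.indicator (fun p => g p.1 • f p.2) (u, r)
  have hF : Integrable (Function.uncurry F) (μ.prod μ) :=
    (hg.1.smul_prod hf.1).indicator (measurableSet_le measurable_snd measurable_fst)
  have hL : ∀ u ∈ Ioc s t, g u • ∫ r in s..u, f r = ∫ r, F u r ∂μ := fun u hu => by
    have hFu : (fun r => F u r) = (Iic u).indicator (fun r => g u • f r) := by
      ext r; by_cases h : r ≤ u <;> simp [F, h]
    have hset : Iic u ∩ Ioc s t = Ioc s u := by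
      ext r; simp only [mem_inter_iff, mem_Iic, mem_Ioc]; grind
    rw [hFu, MeasureTheory.integral_indicator measurableSet_Iic,
      Measure.restrict_restrict measurableSet_Iic, hset, MeasureTheory.integral_smul,
      intervalIntegral.integral_of_le hu.1.le]
  have hR : ∀ r ∈ Ioc s t, (∫ u in r..t, g u) • f r = ∫ u, F u r ∂μ := fun r hr => by
    have hFr : (fun u => F u r) = (Ici r).indicator (fun u => g u • f r) := by
      ext u; by_cases h : r ≤ u <;> simp [F, h]
    have hset : Ici r ∩ Ioc s t = Icc r t := by
      ext u; simp only [mem_inter_iff, mem_Ici, mem_Ioc, mem_Icc]; grind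
    rw [hFr, MeasureTheory.integral_indicator measurableSet_Ici,
      Measure.restrict_restrict measurableSet_Ici, hset, _root_.integral_smul_const,
      integral_Icc_eq_integral_Ioc, intervalIntegral.integral_of_le hr.2]
  rw [intervalIntegral.integral_of_le hst, intervalIntegral.integral_of_le hst,
    setIntegral_congr_fun measurableSet_Ioc hL, setIntegral_congr_fun measurableSet_Ioc hR]
  exact integral_integral_swap hF

theorem smul_eq_add_integral_of_eq_add_integral [CompleteSpace E] {g g' : ℝ → ℝ}
    (hg : ∀ u, HasDerivAt g (g' u) u) (hg' : Continuous g') {w f : ℝ → E} {s t : ℝ} (hst : s ≤ t)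
    (hf : IntervalIntegrable f volume s t) (hw : ∀ u ∈ Icc s t, w u = w s + ∫ r in s..u, f r) :
    g t • w t = g s • w s + ∫ u in s..t, (g u • f u + g' u • w u) := by
  open intervalIntegral in
  have hg_cont : Continuous g := continuous_iff_continuousAt.2 fun u => (hg u).continuousAt
  have hg'_int : ∀ a b, ∫ u in a..b, g' u = g b - g a := fun a b =>
    integral_eq_sub_of_hasDerivAt (fun u _ => hg u) (hg'.intervalIntegrable a b)
  have hprim : ContinuousOn (fun u => ∫ r in s..u, f r) (Icc s t) := by
    simpa [uIcc_of_le hst] using continuousOn_primitive_interval' hf left_mem_uIcc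
  have hgf : IntervalIntegrable (fun u => g u • f u) volume s t :=
    hf.continuousOn_smul hg_cont.continuousOn
  have hg'w_s : IntervalIntegrable (fun u => g' u • w s) volume s t :=
    (hg'.smul continuous_const).intervalIntegrable s t
  have hg'prim : IntervalIntegrable (fun u => g' u • ∫ r in s..u, f r) volume s t :=
    (hg'.continuousOn.smul hprim).intervalIntegrable_of_Icc hst
  have hg'w : IntervalIntegrable (fun u => g' u • w u) volume s t :=
    (hg'.continuousOn.smul ((continuousOn_const.add hprim).congr hw)).intervalIntegrable_of_Icc hst
  have key : ∫ u in s..t, g' u • w u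
      = (g t - g s) • w s + ((g t • ∫ r in s..t, f r) - ∫ u in s..t, g u • f u) :=
    calc ∫ u in s..t, g' u • w u = ∫ u in s..t, (g' u • w s + g' u • ∫ r in s..u, f r) :=
          integral_congr fun u hu => by rw [hw u (uIcc_of_le hst ▸ hu), smul_add]
      _ = (∫ u in s..t, g' u) • w s + ∫ r in s..t, (∫ u in r..t, g' u) • f r := by
          rw [integral_add hg'w_s hg'prim, intervalIntegral.integral_smul_const,
            integral_smul_integral_swap hst hf (hg'.intervalIntegrable s t)]
      _ = (g t - g s) • w s + ∫ r in s..t, (g t • f r - g r • f r) := by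
          simp only [hg'_int, sub_smul]
      _ = _ := by
          rw [integral_sub (f := fun r => g t • f r) (hf.smul (g t)) hgf,
            intervalIntegral.integral_smul]
  rw [intervalIntegral.integral_add hgf hg'w, key, hw t ⟨hst, le_rfl⟩]
  module

end Integral

theorem eq_zero_of_le_mul_integral {f : ℝ → ℝ} {K s : ℝ} (hf : Continuous f)
    (hf_nonneg : ∀ t, s ≤ t → 0 ≤ f t) (hfK : ∀ t, s ≤ t → f t ≤ K * ∫ u in s..t, f u) {t : ℝ}
    (hst : s ≤ t) : f t = 0 := by
  have hφ : ∀ r, HasDerivAt (fun r => ∫ u in s..r, f u) (f r) r := fun r =>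
    (hf.integral_hasStrictDerivAt s r).hasDerivAt
  have hφ_zero := eq_zero_of_abs_deriv_le_mul_abs_self_of_eq_zero_right (K := K) (b := t)
    (fun r _ => (hφ r).continuousAt.continuousWithinAt) (fun r _ => (hφ r).hasDerivWithinAt)
    intervalIntegral.integral_same fun r hr => by
      rw [Real.norm_of_nonneg (hf_nonneg r hr.1),
        Real.norm_of_nonneg (intervalIntegral.integral_nonneg hr.1 fun u hu => hf_nonneg u hu.1)]
      exact hfK r hr.1
  refine le_antisymm ?_ (hf_nonneg t hst)
  simpa [hφ_zero t ⟨hst, le_rfl⟩] using hfK t hst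

namespace ProperCone

variable {E : Type*} [NormedAddCommGroup E] [NormedSpace ℝ E] [CompleteSpace E]
  (K : ProperCone ℝ E) {C : ℝ → E →L[ℝ] E} {M l s : ℝ} {v : ℝ → E}

theorem mem_of_eq_add_integral_of_continuous (hC : AEStronglyMeasurable C volume)
    (hM : ∀ᵐ u, s ≤ u → ‖C u‖ ≤ M)
    (hK : ∀ᵐ u, s ≤ u → MapsTo (C u + l • ContinuousLinearMap.id ℝ E) K K)
    (hv_cont : Continuous v) (hv : ∀ t, s ≤ t → v t = v s + ∫ u in s..t, C u (v u))
    (hvs : v s ∈ K) {t : ℝ} (hst : s ≤ t) : v t ∈ K := by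
  set A : ℝ → E →L[ℝ] E := fun u => C u + l • ContinuousLinearMap.id ℝ E
  have hA_meas : AEStronglyMeasurable A volume := hC.add aestronglyMeasurable_const
  have hA_norm : ∀ᵐ u, s ≤ u → ‖A u‖ ≤ M + |l| := hM.mono fun u hu hsu =>
    calc ‖A u‖ ≤ ‖C u‖ + ‖l‖ * ‖ContinuousLinearMap.id ℝ E‖ :=
          (norm_add_le _ _).trans_eq (by rw [norm_smul])
      _ ≤ M + ‖l‖ * 1 := by
          gcongr
          exacts [hu hsu, ContinuousLinearMap.norm_id_le]
      _ = M + |l| := by rw [mul_one, Real.norm_eq_abs]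
  set Y : ℝ → E := fun u => Real.exp (l * (u - s)) • v u
  have hY_cont : Continuous Y := by fun_prop
  have hY_eq : ∀ t, s ≤ t → Y t = v s + ∫ u in s..t, A u (Y u) := fun t ht => by
    have hexp : ∀ u, HasDerivAt (fun r => Real.exp (l * (r - s))) (l * Real.exp (l * (u - s))) u :=
      fun u => by simpa [mul_comm] using (((hasDerivAt_id u).sub_const s).const_mul l).exp
    have := smul_eq_add_integral_of_eq_add_integral hexp (by fun_prop) ht
      (intervalIntegrable_apply_of_norm_le hC hM hv_cont ht) fun u hu => hv u hu.1
    simpa [Y, A, smul_smul, mul_comm] using this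
  have hN_le : ∀ t, s ≤ t → infDist (Y t) K ≤ (M + |l|) * ∫ u in s..t, infDist (Y u) K := by
    intro t ht
    have hAY := (intervalIntegrable_apply_of_norm_le hA_meas hA_norm hY_cont ht).1
    have hbound : ∀ᵐ u ∂volume.restrict (Ioc s t),
        infDist (A u (Y u)) K ≤ (M + |l|) * infDist (Y u) K := by
      filter_upwards [ae_restrict_mem measurableSet_Ioc, ae_restrict_of_ae hA_norm,
        ae_restrict_of_ae hK] with u hu hAu hKu
      exact ((A u).lipschitz.infDist_le_mul_of_mapsTo ⟨0, K.zero_mem⟩ (hKu hu.1.le) _).trans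
        (mul_le_mul_of_nonneg_right (hAu hu.1.le) infDist_nonneg)
    calc infDist (Y t) K = infDist (v s + ∫ u in s..t, A u (Y u)) K := by rw [hY_eq t ht]
      _ ≤ infDist (v s) K + infDist (∫ u in s..t, A u (Y u)) K := K.infDist_add_le _ _
      _ = infDist (∫ u in Ioc s t, A u (Y u)) K := by
        rw [infDist_zero_of_mem hvs, zero_add, intervalIntegral.integral_of_le ht]
      _ ≤ ∫ u in Ioc s t, infDist (A u (Y u)) K := K.infDist_integral_le hAY
      _ ≤ ∫ u in Ioc s t, (M + |l|) * infDist (Y u) K :=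
        integral_mono_ae (K.integrable_infDist_comp hAY)
          (((continuous_infDist_pt _).comp hY_cont).integrableOn_Ioc.const_mul _) hbound
      _ = _ := by rw [integral_const_mul, intervalIntegral.integral_of_le ht]
  have hY_mem : Y t ∈ K := K.infDist_eq_zero_iff.1 <| eq_zero_of_le_mul_integral
    ((continuous_infDist_pt _).comp hY_cont) (fun _ _ => infDist_nonneg) hN_le hst
  have hvY : v t = Real.exp (-(l * (t - s))) • Y t := by
    simp [Y, smul_smul, ← Real.exp_add]
  exact hvY ▸ K.smul_mem hY_mem (Real.exp_pos _).le

theorem mem_of_eq_add_integral (hC : AEStronglyMeasurable C volume)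
    (hM : ∀ᵐ u, s ≤ u → ‖C u‖ ≤ M)
    (hK : ∀ᵐ u, s ≤ u → MapsTo (C u + l • ContinuousLinearMap.id ℝ E) K K)
    (hv_cont : ContinuousOn v (Ici s)) (hv : ∀ t, s ≤ t → v t = v s + ∫ u in s..t, C u (v u))
    (hvs : v s ∈ K) {t : ℝ} (hst : s ≤ t) : v t ∈ K := by
  set w : ℝ → E := fun u => v (max u s)
  have hw : ∀ u, s ≤ u → w u = v u := fun u hu => by simp [w, max_eq_left hu]
  have hw_cont : Continuous w := hv_cont.comp_continuous (by fun_prop) fun u => le_max_right u s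
  rw [← hw t hst]
  refine K.mem_of_eq_add_integral_of_continuous hC hM hK hw_cont (fun t ht => ?_)
    (hw s le_rfl ▸ hvs) hst
  rw [hw t ht, hw s le_rfl, hv t ht]
  congr 1
  exact intervalIntegral.integral_congr fun u hu => by rw [hw u (uIcc_of_le ht ▸ hu).1]

end ProperCone

/-- Let `C : [0,∞) → L(l¹)` be a strongly measurable family of continuous
linear operators on `l¹(ℕ, ℝ)` with `‖C t‖ ≤ M` for a.e. `t`, whose matrix entries are
(a.e.) nonnegative off the diagonal.  If `v : [s,∞) → l¹` is continuous and satisfies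
`v t = v s + ∫_s^t C u (v u) du` (Bochner integral in `l¹`) for all `t ≥ s`, and every
coordinate of `v s` is nonnegative, then every coordinate of `v t` is nonnegative for all
`t ≥ s`. -/
theorem coordinates_nonneg_of_offdiagonal_nonneg
    (C : ℝ → (l1Space →L[ℝ] l1Space)) (M : ℝ)
    (hmeas : StronglyMeasurable C)
    (hM : ∀ᵐ t : ℝ, 0 ≤ t → ‖C t‖ ≤ M)
    (hpos : ∀ᵐ t : ℝ, 0 ≤ t → ∀ i j : ℕ, i ≠ j → 0 ≤ (C t (lp.single 1 j (1 : ℝ))) i)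
    (s : ℝ) (hs : 0 ≤ s)
    (v : ℝ → l1Space)
    (hvcont : ContinuousOn v (Set.Ici s))
    (hv : ∀ t, s ≤ t → v t = v s + ∫ u in s..t, C u (v u))
    (hv0 : ∀ i : ℕ, 0 ≤ (v s) i) :
    ∀ t, s ≤ t → ∀ i : ℕ, 0 ≤ (v t) i := by
  have hM' : ∀ᵐ u, s ≤ u → ‖C u‖ ≤ M := hM.mono fun u h hsu => h (hs.trans hsu)
  have hK : ∀ᵐ u, s ≤ u → MapsTo (C u + M • ContinuousLinearMap.id ℝ l1Space)
      (lp.nonnegCone ℕ 1) (lp.nonnegCone ℕ 1) := by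
    filter_upwards [hM, hpos] with u hCu hCpos hsu
    exact lp.mapsTo_nonnegCone_add_smul_id ENNReal.one_ne_top (hCu (hs.trans hsu))
      (hCpos (hs.trans hsu))
  intro t hst
  exact (lp.nonnegCone ℕ 1).mem_of_eq_add_integral hmeas.aestronglyMeasurable hM' hK hvcont hv
    hv0 hst
end
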